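/- Let B : Fin r → Finset (Fin n) be pairwise disjoint with ⋃_k B k = Finset.univ. For each k let P_k : (∀ i, α i) → ℝ be a nonnegative measurable function depending only on the coordinates in B k with (∫_{B k} P_k) y = 1 for every y; let K be a finite type, w : K → ℝ, and U_k : K → (∀ i, α i) → ℝ with each U_k c bounded, measurable, and depending only on the coordinates in B k. Then for every y: ∫ (Σ_{c ∈ K} w c · ∏_k U_k c y') · (∏_k P_k y') dμ(y') = Σ_{c ∈ K} w c · ∏_k (∫_{B k} (P_k · U_k c)) y. That is, for a junction tree with several connectivity components, the overall expected utility equals the corner-weighted sum over configurations of the products of the components' separate evaluations. -/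

import Mathlib

open MeasureTheory

/-- The partial integral `∫_T f`: the marginal integral of `f` over the
coordinates in `T`, as a function of the remaining coordinates. -/
noncomputable def partialIntegral {n : ℕ} {α : Fin n → Type*}
    [∀ i, MeasurableSpace (α i)] (μ : ∀ i, Measure (α i))
    (T : Finset (Fin n)) (f : (∀ i, α i) → ℝ) : (∀ i, α i) → ℝ :=
  fun y => ∫ x : ∀ i : {i // i ∈ T}, α i.val,
    f (fun j => if h : j ∈ T then x ⟨j, h⟩ else y j)
      ∂(Measure.pi fun i : {i // i ∈ T} => μ i.val)

section Aux

variable {n : ℕ} {α : Fin n → Type*} [∀ i, MeasurableSpace (α i)]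

/-- Combine a point of the marginal space on `T` with a base point `y`. -/
def combineP (T : Finset (Fin n)) (y : ∀ i, α i)
    (x : ∀ i : {i // i ∈ T}, α i.val) : ∀ j, α j :=
  fun j => if h : j ∈ T then x ⟨j, h⟩ else y j

lemma measurable_combineP (T : Finset (Fin n)) (y : ∀ i, α i) :
    Measurable (combineP (α := α) T y) := by
  rw [measurable_pi_iff]
  intro j
  by_cases h : j ∈ T
  · simp only [combineP, dif_pos h]
    exact measurable_pi_apply _
  · simp only [combineP, dif_neg h]
    exact measurable_const

/-- Integrability of the marginal integrand. -/
def PIntegrable (μ : ∀ i, Measure (α i)) (T : Finset (Fin n))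
    (f : (∀ i, α i) → ℝ) (y : ∀ i, α i) : Prop :=
  Integrable (fun x => f (combineP T y x))
    (Measure.pi fun i : {i // i ∈ T} => μ i.val)

lemma partialIntegral_def (μ : ∀ i, Measure (α i)) (T : Finset (Fin n))
    (f : (∀ i, α i) → ℝ) (y : ∀ i, α i) :
    partialIntegral μ T f y
      = ∫ x, f (combineP T y x) ∂(Measure.pi fun i : {i // i ∈ T} => μ i.val) := rfl

lemma pfu_left {s t : Finset (Fin n)} (h : Disjoint s t)
    (x : (∀ i : s, α i) × (∀ i : t, α i)) (j : Fin n) (hj : j ∈ s) :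
    (MeasurableEquiv.piFinsetUnion α h) x ⟨j, Finset.mem_union_left t hj⟩ = x.1 ⟨j, hj⟩ := by
  show (MeasurableEquiv.piCongrLeft (fun i : ↥(s ∪ t) => α i) (Equiv.Finset.union s t h))
      ((MeasurableEquiv.sumPiEquivProdPi _).symm x)
      ((Equiv.Finset.union s t h) (Sum.inl ⟨j, hj⟩)) = x.1 ⟨j, hj⟩
  rw [MeasurableEquiv.coe_piCongrLeft, Equiv.piCongrLeft_apply_apply]
  rfl

lemma pfu_right {s t : Finset (Fin n)} (h : Disjoint s t)
    (x : (∀ i : s, α i) × (∀ i : t, α i)) (j : Fin n) (hj : j ∈ t) :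
    (MeasurableEquiv.piFinsetUnion α h) x ⟨j, Finset.mem_union_right s hj⟩ = x.2 ⟨j, hj⟩ := by
  show (MeasurableEquiv.piCongrLeft (fun i : ↥(s ∪ t) => α i) (Equiv.Finset.union s t h))
      ((MeasurableEquiv.sumPiEquivProdPi _).symm x)
      ((Equiv.Finset.union s t h) (Sum.inr ⟨j, hj⟩)) = x.2 ⟨j, hj⟩
  rw [MeasurableEquiv.coe_piCongrLeft, Equiv.piCongrLeft_apply_apply]
  rfl

variable (μ : ∀ i, Measure (α i)) [∀ i, SigmaFinite (μ i)]

/-- Splitting a partial integral over a disjoint union of coordinate blocks. -/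
lemma split_partialIntegral (s t : Finset (Fin n)) (hst : Disjoint s t)
    (f₁ f₂ : (∀ i, α i) → ℝ)
    (h₁d : ∀ y y', (∀ i ∈ s, y i = y' i) → f₁ y = f₁ y')
    (h₂d : ∀ y y', (∀ i ∈ t, y i = y' i) → f₂ y = f₂ y')
    (y : ∀ i, α i) :
    partialIntegral μ (s ∪ t) (fun z => f₁ z * f₂ z) y
        = partialIntegral μ s f₁ y * partialIntegral μ t f₂ y
    ∧ (PIntegrable μ s f₁ y → PIntegrable μ t f₂ y →
        PIntegrable μ (s ∪ t) (fun z => f₁ z * f₂ z) y) := by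
  classical
  have hMP := measurePreserving_piFinsetUnion (α := α) hst μ
  set Ψ := MeasurableEquiv.piFinsetUnion α hst with hΨ
  have key : ∀ x : (∀ i : s, α i) × (∀ i : t, α i),
      f₁ (combineP (s ∪ t) y (Ψ x)) * f₂ (combineP (s ∪ t) y (Ψ x))
        = f₁ (combineP s y x.1) * f₂ (combineP t y x.2) := by
    intro x
    have e1 : f₁ (combineP (s ∪ t) y (Ψ x)) = f₁ (combineP s y x.1) := by
      apply h₁d
      intro i hi
      have hm : i ∈ s ∪ t := Finset.mem_union_left t hi
      show (combineP (s ∪ t) y (Ψ x)) i = (combineP s y x.1) i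
      simp only [combineP, dif_pos hm, dif_pos hi]
      exact pfu_left hst x i hi
    have e2 : f₂ (combineP (s ∪ t) y (Ψ x)) = f₂ (combineP t y x.2) := by
      apply h₂d
      intro i hi
      have hm : i ∈ s ∪ t := Finset.mem_union_right s hi
      show (combineP (s ∪ t) y (Ψ x)) i = (combineP t y x.2) i
      simp only [combineP, dif_pos hm, dif_pos hi]
      exact pfu_right hst x i hi
    rw [e1, e2]
  constructor
  · calc partialIntegral μ (s ∪ t) (fun z => f₁ z * f₂ z) y
        = ∫ x, f₁ (combineP (s ∪ t) y (Ψ x)) * f₂ (combineP (s ∪ t) y (Ψ x))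
            ∂((Measure.pi fun i : s => μ i).prod (Measure.pi fun i : t => μ i)) :=
          (hMP.integral_comp' _).symm
      _ = ∫ x, f₁ (combineP s y x.1) * f₂ (combineP t y x.2)
            ∂((Measure.pi fun i : s => μ i).prod (Measure.pi fun i : t => μ i)) :=
          integral_congr_ae (Filter.Eventually.of_forall key)
      _ = partialIntegral μ s f₁ y * partialIntegral μ t f₂ y :=
          integral_prod_mul (fun a => f₁ (combineP s y a)) (fun b => f₂ (combineP t y b))
  · intro h1 h2
    have h3 : Integrable (fun x : (∀ i : s, α i) × (∀ i : t, α i) =>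
        f₁ (combineP s y x.1) * f₂ (combineP t y x.2))
        ((Measure.pi fun i : s => μ i).prod (Measure.pi fun i : t => μ i)) :=
      Integrable.mul_prod h1 h2
    have h4 := (hMP.integrable_comp_emb Ψ.measurableEmbedding
      (g := fun z => f₁ (combineP (s ∪ t) y z) * f₂ (combineP (s ∪ t) y z))).mp
    apply h4
    have : ((fun z => f₁ (combineP (s ∪ t) y z) * f₂ (combineP (s ∪ t) y z)) ∘ Ψ)
        = fun x => f₁ (combineP s y x.1) * f₂ (combineP t y x.2) := funext key
    rw [this]
    exact h3

/-- Factorization of a partial integral of a product over disjoint blocks. -/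
lemma prod_partialIntegral {r : ℕ} (B : Fin r → Finset (Fin n))
    (hdisj : ∀ k k' : Fin r, k ≠ k' → Disjoint (B k) (B k'))
    (g : Fin r → (∀ i, α i) → ℝ)
    (hgd : ∀ k y y', (∀ i ∈ B k, y i = y' i) → g k y = g k y')
    (y : ∀ i, α i) (S : Finset (Fin r))
    (hgint : ∀ k ∈ S, PIntegrable μ (B k) (g k) y) :
    partialIntegral μ (S.biUnion B) (fun z => ∏ k ∈ S, g k z) y
        = ∏ k ∈ S, partialIntegral μ (B k) (g k) y
    ∧ PIntegrable μ (S.biUnion B) (fun z => ∏ k ∈ S, g k z) y := by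
  classical
  induction S using Finset.induction_on with
  | empty =>
      haveI : IsEmpty {i // i ∈ ((∅ : Finset (Fin r)).biUnion B)} := by
        refine ⟨fun x => ?_⟩
        have h := x.2
        simp only [Finset.mem_biUnion] at h
        obtain ⟨k, hk, -⟩ := h
        exact Finset.notMem_empty _ hk
      constructor
      · rw [partialIntegral_def, Finset.prod_empty]
        simp only [Finset.prod_empty]
        rw [Measure.pi_of_empty]
        rw [integral_const, Measure.real, Measure.dirac_apply_of_mem (Set.mem_univ _)]
        simp
      · unfold PIntegrable
        simp only [Finset.prod_empty]
        rw [Measure.pi_of_empty]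
        exact integrable_const 1
  | @insert k S' hk ih =>
      have hdisj' : Disjoint (B k) (S'.biUnion B) := by
        rw [Finset.disjoint_biUnion_right]
        intro k' hk'
        refine hdisj k k' ?_
        rintro rfl
        exact hk hk'
      have hdep2 : ∀ y₁ y₂, (∀ i ∈ S'.biUnion B, y₁ i = y₂ i)
          → (∏ k' ∈ S', g k' y₁) = ∏ k' ∈ S', g k' y₂ := by
        intro y₁ y₂ hyy
        exact Finset.prod_congr rfl fun k' hk' =>
          hgd k' y₁ y₂ fun i hi => hyy i (Finset.mem_biUnion.2 ⟨k', hk', hi⟩)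
      have ihh := ih (fun k' hk' => hgint k' (Finset.mem_insert_of_mem hk'))
      have hs := split_partialIntegral μ (B k) (S'.biUnion B) hdisj'
        (g k) (fun z => ∏ k' ∈ S', g k' z) (hgd k) hdep2 y
      have hprodeq : (fun z => ∏ k' ∈ insert k S', g k' z)
          = fun z => g k z * ∏ k' ∈ S', g k' z := funext fun z => Finset.prod_insert hk
      rw [Finset.biUnion_insert, hprodeq, Finset.prod_insert hk]
      exact ⟨by rw [hs.1, ihh.1], hs.2 (hgint k (Finset.mem_insert_self k S')) ihh.2⟩

/-- The partial integral over all coordinates is the full integral. -/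
lemma univ_partialIntegral (f : (∀ i, α i) → ℝ) (y : ∀ i, α i) :
    partialIntegral μ (Finset.univ : Finset (Fin n)) f y = ∫ z, f z ∂(Measure.pi μ)
    ∧ (PIntegrable μ Finset.univ f y ↔ Integrable f (Measure.pi μ)) := by
  let e : {i // i ∈ (Finset.univ : Finset (Fin n))} ≃ Fin n :=
    Equiv.subtypeUnivEquiv (fun i => Finset.mem_univ i)
  have hMP : MeasurePreserving (MeasurableEquiv.piCongrLeft α e)
      (Measure.pi fun i : {i // i ∈ (Finset.univ : Finset (Fin n))} => μ i.val)
      (Measure.pi μ) := by exact measurePreserving_piCongrLeft μ e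
  have key : ∀ x, (MeasurableEquiv.piCongrLeft α e) x = combineP Finset.univ y x := by
    intro x
    funext j
    have h1 : (MeasurableEquiv.piCongrLeft α e) x (e ⟨j, Finset.mem_univ j⟩)
        = x ⟨j, Finset.mem_univ j⟩ := by
      rw [MeasurableEquiv.coe_piCongrLeft]
      exact Equiv.piCongrLeft_apply_apply α e x ⟨j, Finset.mem_univ j⟩
    show (MeasurableEquiv.piCongrLeft α e) x (e ⟨j, Finset.mem_univ j⟩)
        = combineP Finset.univ y x j
    rw [h1]
    simp [combineP]
  constructor
  · calc partialIntegral μ Finset.univ f y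
        = ∫ x, f ((MeasurableEquiv.piCongrLeft α e) x)
            ∂(Measure.pi fun i : {i // i ∈ (Finset.univ : Finset (Fin n))} => μ i.val) := by
          rw [partialIntegral_def]
          exact integral_congr_ae (Filter.Eventually.of_forall fun x =>
            (congrArg f (key x)).symm)
      _ = ∫ z, f z ∂(Measure.pi μ) := hMP.integral_comp' f
  · unfold PIntegrable
    have : (fun x => f (combineP Finset.univ y x))
        = f ∘ (MeasurableEquiv.piCongrLeft α e) := funext fun x =>
      (congrArg f (key x)).symm
    rw [this]
    exact hMP.integrable_comp_emb (MeasurableEquiv.piCongrLeft α e).measurableEmbedding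

/-- Integrability of the marginal of `P * U` for bounded `U` and normalized `P`. -/
lemma block_integrable (T : Finset (Fin n)) (Pk : (∀ i, α i) → ℝ)
    (hPm : Measurable Pk) (hPnn : ∀ z, 0 ≤ Pk z) (y : ∀ i, α i)
    (hnorm : partialIntegral μ T Pk y = 1)
    (Uk : (∀ i, α i) → ℝ) (hUm : Measurable Uk) (M : ℝ) (hM : ∀ z, |Uk z| ≤ M) :
    PIntegrable μ T (fun z => Pk z * Uk z) y := by
  have hPc : Measurable fun x => Pk (combineP T y x) := hPm.comp (measurable_combineP T y)
  have hUc : Measurable fun x => Uk (combineP T y x) := hUm.comp (measurable_combineP T y)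
  have hPint : Integrable (fun x => Pk (combineP T y x))
      (Measure.pi fun i : {i // i ∈ T} => μ i.val) := by
    by_contra h
    rw [partialIntegral_def, integral_undef h] at hnorm
    exact zero_ne_one hnorm
  refine (hPint.const_mul M).mono' ((hPc.mul hUc).aestronglyMeasurable)
    (Filter.Eventually.of_forall fun x => ?_)
  rw [Real.norm_eq_abs, abs_mul, abs_of_nonneg (hPnn _)]
  calc Pk (combineP T y x) * |Uk (combineP T y x)|
      ≤ Pk (combineP T y x) * M := mul_le_mul_of_nonneg_left (hM _) (hPnn _)
    _ = M * Pk (combineP T y x) := mul_comm _ _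

end Aux

/-- For a junction tree with several connectivity components
(supported on the pairwise disjoint blocks `B k` covering all attributes), the
overall expected utility equals the corner-weighted sum over configurations of
the products of the components' separate evaluations. -/
theorem expected_utility_disconnected_components {n r : ℕ} {α : Fin n → Type*}
    [∀ i, MeasurableSpace (α i)]
    (μ : ∀ i, Measure (α i)) [∀ i, SigmaFinite (μ i)]
    (B : Fin r → Finset (Fin n))
    (hdisj : ∀ k k' : Fin r, k ≠ k' → Disjoint (B k) (B k'))
    (hcover : ∀ i : Fin n, ∃ k : Fin r, i ∈ B k)
    (P : Fin r → (∀ i, α i) → ℝ)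
    (hPmeas : ∀ k, Measurable (P k))
    (hPnonneg : ∀ k y, 0 ≤ P k y)
    (hPdep : ∀ (k : Fin r) (y y' : ∀ i, α i),
      (∀ i ∈ B k, y i = y' i) → P k y = P k y')
    (hPnorm : ∀ (k : Fin r) (y : ∀ i, α i), partialIntegral μ (B k) (P k) y = 1)
    (K : Type) [Fintype K] (w : K → ℝ)
    (U : Fin r → K → (∀ i, α i) → ℝ)
    (hUmeas : ∀ k c, Measurable (U k c))
    (hUbdd : ∀ k c, ∃ M, ∀ y, |U k c y| ≤ M)
    (hUdep : ∀ (k : Fin r) (c : K) (y y' : ∀ i, α i),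
      (∀ i ∈ B k, y i = y' i) → U k c y = U k c y') :
    ∀ y : ∀ i, α i,
      ∫ y', (∑ c : K, w c * ∏ k, U k c y') * (∏ k, P k y') ∂(Measure.pi μ)
        = ∑ c : K, w c * ∏ k, partialIntegral μ (B k) (fun y' => P k y' * U k c y') y := by
  intro y
  classical
  have hBuniv : Finset.univ.biUnion B = (Finset.univ : Finset (Fin n)) := by
    refine Finset.eq_univ_iff_forall.2 fun i => ?_
    obtain ⟨k, hk⟩ := hcover i
    exact Finset.mem_biUnion.2 ⟨k, Finset.mem_univ k, hk⟩
  have hinteg : ∀ y' : ∀ i, α i, (∑ c : K, w c * ∏ k, U k c y') * (∏ k, P k y')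
      = ∑ c : K, w c * ∏ k, (P k y' * U k c y') := by
    intro y'
    rw [Finset.sum_mul]
    refine Finset.sum_congr rfl fun c _ => ?_
    rw [mul_assoc, ← Finset.prod_mul_distrib]
    congr 1
    exact Finset.prod_congr rfl fun k _ => mul_comm _ _
  simp_rw [hinteg]
  have hgint : ∀ c k, PIntegrable μ (B k) (fun z => P k z * U k c z) y := by
    intro c k
    obtain ⟨M, hM⟩ := hUbdd k c
    exact block_integrable μ (B k) (P k) (hPmeas k) (hPnonneg k) y (hPnorm k y)
      (U k c) (hUmeas k c) M hM
  have hmain : ∀ c : K,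
      partialIntegral μ Finset.univ (fun z => ∏ k, (P k z * U k c z)) y
          = ∏ k, partialIntegral μ (B k) (fun z => P k z * U k c z) y
      ∧ PIntegrable μ Finset.univ (fun z => ∏ k, (P k z * U k c z)) y := by
    intro c
    have := prod_partialIntegral μ B hdisj (fun k z => P k z * U k c z)
      (fun k y₁ y₂ h => by
        show P k y₁ * U k c y₁ = P k y₂ * U k c y₂
        rw [hPdep k y₁ y₂ h, hUdep k c y₁ y₂ h]) y Finset.univ
      (fun k _ => hgint c k)
    rwa [hBuniv] at this
  have hInt : ∀ c : K, Integrable (fun y' => ∏ k, (P k y' * U k c y')) (Measure.pi μ) :=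
    fun c => (univ_partialIntegral μ (fun z => ∏ k, (P k z * U k c z)) y).2.mp (hmain c).2
  rw [integral_finset_sum Finset.univ (fun c _ => ((hInt c).const_mul (w c)))]
  refine Finset.sum_congr rfl fun c _ => ?_
  rw [integral_const_mul]
  congr 1
  rw [← (univ_partialIntegral μ (fun z => ∏ k, (P k z * U k c z)) y).1, (hmain c).1]
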